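/- For every α ∈ [0,1], either there exist a unique integer n ≥ 0 and unique finite sequences of integers b_1,…,b_n ≥ 2 and c_1,…,c_n ≥ 1 such that α ∈ A_n and α = [0;b_1,…,b_n] + [0;c_1,…,c_n], or there exist unique infinite sequences of integers b_1, b_2, … ≥ 2 and c_1, c_2, … ≥ 1 such that α ∈ A_n for every n ≥ 0. -/

import Mathlib

noncomputable section

namespace ShulgaPaper

open Filter Topology

/-- The value of the finite continued fraction `[0; a₁, …, aₙ]`
(the empty continued fraction has value `0`). -/
def cf : List ℕ → ℝ
  | [] => 0
  | a :: l => 1 / ((a : ℝ) + cf l)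

/-- Iterates of the Gauss map, starting from the fractional part of `x`. -/
def gaussIter (x : ℝ) : ℕ → ℝ
  | 0 => Int.fract x
  | n + 1 => Int.fract (1 / gaussIter x n)

/-- The `n`-th partial quotient `aₙ(x)` of the continued fraction expansion of `x`
(for `n ≥ 1`; a junk value is returned if it is undefined). -/
def pq (x : ℝ) (n : ℕ) : ℕ := ⌊1 / gaussIter x (n - 1)⌋₊

/-- The `n`-th partial quotient `aₙ(x)` of `x` is defined (`n ≥ 1`), i.e. `n` does not
exceed the length of the continued fraction expansion of `x`. -/
def pqDefined (x : ℝ) (n : ℕ) : Prop := gaussIter x (n - 1) ≠ 0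

/-- The set `G` of real numbers that are rational or whose partial quotients diverge. -/
def G : Set ℝ :=
  {x | (∃ q : ℚ, x = (q : ℝ)) ∨ Tendsto (fun n => pq x n) atTop atTop}

/-- The list of pairs `(b_k, c_k)`, `k = 1, …, n`, produced by (a totalized version of)
Shulga's algorithm applied to `α`. -/
def shulgaList (α : ℝ) : ℕ → List (ℕ × ℕ)
  | 0 => []
  | n + 1 =>
      let L := shulgaList α n
      let b := pq (α - cf (L.map Prod.snd)) (n + 1) + 1
      let c := pq (α - cf (L.map Prod.fst ++ [b])) (n + 1)
      L ++ [(b, c)]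

/-- The list `[b₁, …, bₙ]` of Shulga's algorithm applied to `α`. -/
def bList (α : ℝ) (n : ℕ) : List ℕ := (shulgaList α n).map Prod.fst

/-- The list `[c₁, …, cₙ]` of Shulga's algorithm applied to `α`. -/
def cList (α : ℝ) (n : ℕ) : List ℕ := (shulgaList α n).map Prod.snd

/-- `bₙ` of Shulga's algorithm applied to `α` (for `n ≥ 1`). -/
def shulgaB (α : ℝ) (n : ℕ) : ℕ := ((shulgaList α n).getLast?.getD (0, 0)).1

/-- `cₙ` of Shulga's algorithm applied to `α` (for `n ≥ 1`). -/
def shulgaC (α : ℝ) (n : ℕ) : ℕ := ((shulgaList α n).getLast?.getD (0, 0)).2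

/-- The first `n` steps of Shulga's algorithm applied to `α` are defined: for each step
`k + 1 ≤ n`, the partial quotients `a_{k+1}(α - [0;c₁,…,c_k])` and
`a_{k+1}(α - [0;b₁,…,b_{k+1}])` defining `b_{k+1}` and `c_{k+1}` exist
(in particular the algorithm has not stopped before step `n`). -/
def shulgaDefined (α : ℝ) (n : ℕ) : Prop :=
  ∀ k < n, pqDefined (α - cf (cList α k)) (k + 1) ∧
    pqDefined (α - cf (bList α (k + 1))) (k + 1)

/-- The half-open interval whose included endpoint is `x` and excluded endpoint is `y`,
the smaller one being the left endpoint. -/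
def hIco (x y : ℝ) : Set ℝ := if x ≤ y then Set.Ico x y else Set.Ioc y x

/-- The list `[a 1, …, a n]`. -/
def listOf (a : ℕ → ℕ) (n : ℕ) : List ℕ := (List.range n).map fun i => a (i + 1)

/-- The interval `B_k` determined by the digits `b`, `c` (`k ≥ 1`). -/
def Bset (b c : ℕ → ℕ) (k : ℕ) : Set ℝ :=
  hIco (cf (listOf b (k - 1) ++ [b k - 1]) + cf (listOf c (k - 1)))
    (cf (listOf b k) + cf (listOf c (k - 1)))

/-- The interval `C_k` determined by the digits `b`, `c` (`k ≥ 1`). -/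
def Cset (b c : ℕ → ℕ) (k : ℕ) : Set ℝ :=
  hIco (cf (listOf c k) + cf (listOf b k))
    (cf (listOf c (k - 1) ++ [c k + 1]) + cf (listOf b k))

/-- `A₀ = [0,1]` and `Aₙ = ⋂_{k=1}^{n} (B_k ∩ C_k)` for `n ≥ 1`. -/
def Aset (b c : ℕ → ℕ) : ℕ → Set ℝ
  | 0 => Set.Icc 0 1
  | n + 1 => ⋂ k ∈ Finset.Icc 1 (n + 1), (Bset b c k ∩ Cset b c k)

/-- The denominators of the convergents of `[0; a 1, a 2, …]`:
`q₀ = 1`, `q₁ = a 1`, `q_k = a k * q_{k-1} + q_{k-2}`. -/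
def qden (a : ℕ → ℕ) : ℕ → ℕ
  | 0 => 1
  | 1 => a 1
  | n + 2 => a (n + 2) * qden a (n + 1) + qden a n

/-!
Let `q = qₖ`, `q' = qₖ₋₁` be the denominators of the convergents of `[0; a₁, …, aₖ]`. Then
`[0; a₁, …, aₖ, m]` lies at distance `gap m = 1 / (q (m q + q'))` from `[0; a₁, …, aₖ]`, on the
side given by `(-1)ᵏ`. So, writing `Dₖ = (-1)ᵏ (α - [0; b₁, …, bₖ] - [0; c₁, …, cₖ])`,
`α ∈ B_{k+1}` says `Dₖ ∈ (gap_b (b_{k+1}), gap_b (b_{k+1} - 1)]` and `α ∈ C_{k+1}` says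
`Dₖ - gap_b (b_{k+1}) ∈ (gap_c (c_{k+1} + 1), gap_c (c_{k+1})]`. As the gaps decrease, these
brackets determine the digits one at a time, and `α ∈ B_{k+1}` forces `Dₖ > 0`; this gives
uniqueness, the finite length being the first `n` with `Dₙ = 0`.

For existence the digits are chosen greedily. The choice stays possible because
`0 ≤ Dₖ ≤ gap_c 1` is preserved together with `q_b ≤ q_c` and `q_b' ≤ q_c'` (so that
`gap_c 1 ≤ gap_b 1`); the latter holds because the two brackets force `b_{k+1} ≤ c_{k+1}`.
-/

open Set

/-- `contMat [a₁, …, aₙ] = !![qₙ, qₙ₋₁; pₙ, pₙ₋₁]`, where `pₖ / qₖ` are the convergents of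
`[0; a₁, …, aₙ]`. -/
def contMat : List ℕ → Matrix (Fin 2) (Fin 2) ℕ
  | [] => 1
  | a :: l => !![a, 1; 1, 0] * contMat l

def den (l : List ℕ) : ℕ := contMat l 0 0

def den' (l : List ℕ) : ℕ := contMat l 0 1

lemma contMat_cons_apply (a : ℕ) (l : List ℕ) :
    contMat (a :: l) = !![a * den l + contMat l 1 0, a * den' l + contMat l 1 1;
      den l, den' l] := by
  ext i j
  fin_cases i <;> fin_cases j <;> simp [contMat, den, den', Matrix.mul_apply, Fin.sum_univ_two]

lemma den_cons (a : ℕ) (l : List ℕ) : den (a :: l) = a * den l + contMat l 1 0 := by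
  rw [den, contMat_cons_apply]; simp

lemma contMat_cons_one_zero (a : ℕ) (l : List ℕ) : contMat (a :: l) 1 0 = den l := by
  rw [contMat_cons_apply]; simp

lemma contMat_append_singleton (l : List ℕ) (m : ℕ) :
    contMat (l ++ [m]) = contMat l * !![m, 1; 1, 0] := by
  induction l with
  | nil => simp [contMat]
  | cons a l ih => simp only [List.cons_append, contMat, ih, Matrix.mul_assoc]

lemma den_append_singleton (l : List ℕ) (m : ℕ) : den (l ++ [m]) = m * den l + den' l := by
  simp [den, den', contMat_append_singleton, Matrix.mul_apply, Fin.sum_univ_two, mul_comm]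

lemma den'_append_singleton (l : List ℕ) (m : ℕ) : den' (l ++ [m]) = den l := by
  simp [den, den', contMat_append_singleton, Matrix.mul_apply, Fin.sum_univ_two]

lemma one_le_den {l : List ℕ} (hl : ∀ a ∈ l, 1 ≤ a) : 1 ≤ den l := by
  induction l with
  | nil => simp [den, contMat]
  | cons a l ih =>
    have h := ih fun x hx => hl x (List.mem_cons_of_mem a hx)
    have ha := hl a List.mem_cons_self
    rw [den_cons]
    nlinarith

lemma cf_eq_div {l : List ℕ} (hl : ∀ a ∈ l, 1 ≤ a) : cf l = contMat l 1 0 / den l := by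
  induction l with
  | nil => simp [cf, contMat]
  | cons a l ih =>
    have hl' : ∀ x ∈ l, 1 ≤ x := fun x hx => hl x (List.mem_cons_of_mem a hx)
    have hq : (0 : ℝ) < den l := by exact_mod_cast one_le_den hl'
    rw [cf, ih hl', den_cons, contMat_cons_one_zero]
    push_cast
    field_simp

lemma contMat_det (l : List ℕ) :
    (den l : ℝ) * contMat l 1 1 - den' l * contMat l 1 0 = (-1) ^ l.length := by
  induction l with
  | nil => simp [den, den', contMat]
  | cons a l ih =>
    simp only [contMat_cons_apply, den, den'] at ih ⊢
    simp only [Matrix.of_apply, Matrix.cons_val', Matrix.cons_val_zero, Matrix.cons_val_one,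
      Matrix.empty_val', Matrix.cons_val_fin_one, List.length_cons, pow_succ]
    push_cast
    linear_combination -ih

def gap (l : List ℕ) (m : ℕ) : ℝ := 1 / (den l * (m * den l + den' l))

section Gap

variable {l : List ℕ} (hl : ∀ a ∈ l, 1 ≤ a)
include hl

lemma cf_append_singleton {m : ℕ} (hm : 1 ≤ m) :
    cf (l ++ [m]) = cf l + (-1) ^ l.length * gap l m := by
  have hlm : ∀ a ∈ l ++ [m], 1 ≤ a := by simpa [or_imp, forall_and] using ⟨hl, hm⟩
  have hnum : contMat (l ++ [m]) 1 0 = m * contMat l 1 0 + contMat l 1 1 := by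
    simp [contMat_append_singleton, Matrix.mul_apply, Fin.sum_univ_two, mul_comm]
  have hq : (1 : ℝ) ≤ den l := by exact_mod_cast one_le_den hl
  have hQ : (1 : ℝ) ≤ den (l ++ [m]) := by exact_mod_cast one_le_den hlm
  rw [den_append_singleton] at hQ
  push_cast at hQ
  rw [cf_eq_div hlm, cf_eq_div hl, hnum, den_append_singleton, gap]
  push_cast
  field_simp
  linear_combination contMat_det l

lemma gap_pos {m : ℕ} (hm : 1 ≤ m) : 0 < gap l m := by
  have hq : (1 : ℝ) ≤ den l := by exact_mod_cast one_le_den hl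
  have hm' : (1 : ℝ) ≤ m := by exact_mod_cast hm
  unfold gap
  positivity

lemma gap_antitoneOn : AntitoneOn (gap l) (Ici 1) := by
  intro m hm n _ hmn
  have hq : (1 : ℝ) ≤ den l := by exact_mod_cast one_le_den hl
  have hm' : (1 : ℝ) ≤ m := by exact_mod_cast hm
  unfold gap
  gcongr

lemma tendsto_gap : Tendsto (gap l) atTop (𝓝 0) := by
  have hq : (0 : ℝ) < den l := by exact_mod_cast one_le_den hl
  have h : Tendsto (fun m : ℕ => (den l : ℝ) * (m * den l + den' l)) atTop atTop :=
    (tendsto_atTop_add_const_right _ _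
      (tendsto_natCast_atTop_atTop.atTop_mul_const hq)).const_mul_atTop hq
  convert h.inv_tendsto_atTop using 1
  ext m
  simp [gap]

lemma gap_sub_gap_succ {m : ℕ} (hm : 1 ≤ m) : gap l m - gap l (m + 1) = gap (l ++ [m]) 1 := by
  have hq : (1 : ℝ) ≤ den l := by exact_mod_cast one_le_den hl
  have hm' : (1 : ℝ) ≤ m := by exact_mod_cast hm
  rw [gap, gap, gap, den_append_singleton, den'_append_singleton]
  push_cast
  field_simp
  ring

lemma gap_succ_lt {m : ℕ} (hm : 1 ≤ m) : gap l (m + 1) < gap l m := by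
  have hq : (1 : ℝ) ≤ den l := by exact_mod_cast one_le_den hl
  have hm' : (1 : ℝ) ≤ m := by exact_mod_cast hm
  unfold gap
  push_cast
  gcongr
  linarith

lemma gap_le_gap {l' : List ℕ} (hden : den l ≤ den l') (hden' : den' l ≤ den' l') {m : ℕ}
    (hm : 1 ≤ m) : gap l' m ≤ gap l m := by
  have hq : (1 : ℝ) ≤ den l := by exact_mod_cast one_le_den hl
  have hm' : (1 : ℝ) ≤ m := by exact_mod_cast hm
  unfold gap
  gcongr

end Gap

def bracketIndex (f : ℕ → ℝ) (x : ℝ) : ℕ := sInf {m | f (m + 1) < x}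

lemma bracketIndex_spec {f : ℕ → ℝ} (hf : Tendsto f atTop (𝓝 0)) {x : ℝ} (hx : 0 < x)
    (hx1 : x ≤ f 1) :
    1 ≤ bracketIndex f x ∧ x ∈ Ioc (f (bracketIndex f x + 1)) (f (bracketIndex f x)) := by
  have hne : {m | f (m + 1) < x}.Nonempty :=
    (((tendsto_add_atTop_iff_nat 1).2 hf).eventually (gt_mem_nhds hx)).exists
  have hlt : f (bracketIndex f x + 1) < x := Nat.sInf_mem hne
  have hpos : 1 ≤ bracketIndex f x := by
    by_contra h
    rw [Nat.lt_one_iff.1 (not_le.1 h)] at hlt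
    linarith
  have hge : ¬ f (bracketIndex f x - 1 + 1) < x := Nat.notMem_of_lt_sInf
    (show bracketIndex f x - 1 < bracketIndex f x by omega)
  rw [Nat.sub_add_cancel hpos] at hge
  exact ⟨hpos, hlt, not_lt.1 hge⟩

lemma AntitoneOn.eq_of_mem_Ioc {f : ℕ → ℝ} (hf : AntitoneOn f (Ici 1)) {x : ℝ} {m n : ℕ}
    (hm : x ∈ Ioc (f (m + 1)) (f m)) (hn : x ∈ Ioc (f (n + 1)) (f n)) : m = n := by
  wlog hmn : m ≤ n generalizing m n
  · exact (this hn hm (by omega)).symm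
  by_contra hne
  have : f n ≤ f (m + 1) := hf (by simp) (by simp; omega) (by omega)
  linarith [hm.1, hn.2]

lemma mem_hIco_add_mul_iff {ε s u v x : ℝ} (hε : ε = 1 ∨ ε = -1) (hvu : v < u) :
    x ∈ hIco (s + ε * u) (s + ε * v) ↔ ε * (x - s) ∈ Ioc v u := by
  rcases hε with rfl | rfl
  · rw [hIco, if_neg (by linarith)]
    simp only [mem_Ioc]
    constructor <;> rintro ⟨h1, h2⟩ <;> constructor <;> linarith
  · rw [hIco, if_pos (by linarith)]
    simp only [mem_Ico, mem_Ioc]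
    constructor <;> rintro ⟨h1, h2⟩ <;> constructor <;> linarith

lemma mem_hIco_cf_append_iff {l : List ℕ} (hl : ∀ a ∈ l, 1 ≤ a) {m : ℕ} (hm : 1 ≤ m)
    (t x : ℝ) :
    x ∈ hIco (cf (l ++ [m]) + t) (cf (l ++ [m + 1]) + t) ↔
      (-1) ^ l.length * (x - cf l - t) ∈ Ioc (gap l (m + 1)) (gap l m) := by
  rw [cf_append_singleton hl hm, cf_append_singleton hl (by omega), add_right_comm (cf l) _ t,
    add_right_comm (cf l) _ t, sub_sub]
  exact mem_hIco_add_mul_iff (neg_one_pow_eq_or ℝ _) (gap_succ_lt hl hm)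

-- The sign is read off `lc`, so that appending a digit to `lb` keeps it.
def remainder (α : ℝ) (lb lc : List ℕ) : ℝ := (-1) ^ lc.length * (α - cf lb - cf lc)

lemma remainder_eq_zero_iff {α : ℝ} {lb lc : List ℕ} :
    remainder α lb lc = 0 ↔ α = cf lb + cf lc := by
  simp [remainder, sub_sub, sub_eq_zero]

lemma neg_one_pow_mul_self {R : Type*} [Ring R] (k : ℕ) : ((-1 : R) ^ k) * (-1) ^ k = 1 := by
  rw [← pow_add, ← two_mul, pow_mul, neg_one_sq, one_pow]

lemma remainder_append_left (α : ℝ) {lb lc : List ℕ} (hlb : ∀ a ∈ lb, 1 ≤ a)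
    (hlen : lb.length = lc.length) {m : ℕ} (hm : 1 ≤ m) :
    remainder α (lb ++ [m]) lc = remainder α lb lc - gap lb m := by
  rw [remainder, remainder, cf_append_singleton hlb hm, hlen]
  linear_combination (-gap lb m) * neg_one_pow_mul_self (R := ℝ) lc.length

lemma remainder_append_right (α : ℝ) (lb : List ℕ) {lc : List ℕ} (hlc : ∀ a ∈ lc, 1 ≤ a)
    {m : ℕ} (hm : 1 ≤ m) :
    remainder α lb (lc ++ [m]) = gap lc m - remainder α lb lc := by
  rw [remainder, remainder, cf_append_singleton hlc hm, List.length_append, List.length_singleton,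
    pow_succ]
  linear_combination gap lc m * neg_one_pow_mul_self (R := ℝ) lc.length

section Digits

variable {b c : ℕ → ℕ}

lemma listOf_succ (a : ℕ → ℕ) (k : ℕ) : listOf a (k + 1) = listOf a k ++ [a (k + 1)] := by
  simp [listOf, List.range_succ]

lemma listOf_length (a : ℕ → ℕ) (k : ℕ) : (listOf a k).length = k := by simp [listOf]

lemma listOf_eq_listOf_iff {a a' : ℕ → ℕ} {n : ℕ} :
    listOf a n = listOf a' n ↔ ∀ k, 1 ≤ k → k ≤ n → a k = a' k := by
  simp only [listOf, List.map_inj_left, List.mem_range]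
  refine ⟨fun h k hk hkn => ?_, fun h i hi => h (i + 1) (by omega) (by omega)⟩
  obtain ⟨i, rfl⟩ := Nat.exists_eq_add_of_le' hk
  exact h i (by omega)

lemma mem_Bset_succ_iff {k m : ℕ} (hb : ∀ a ∈ listOf b k, 1 ≤ a) (hm : 1 ≤ m)
    (hbm : b (k + 1) = m + 1) (α : ℝ) :
    α ∈ Bset b c (k + 1) ↔
      remainder α (listOf b k) (listOf c k) ∈
        Ioc (gap (listOf b k) (m + 1)) (gap (listOf b k) m) := by
  rw [Bset, Nat.add_sub_cancel, listOf_succ b, hbm, Nat.add_sub_cancel,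
    mem_hIco_cf_append_iff hb hm, remainder, listOf_length, listOf_length]

lemma mem_Cset_succ_iff {k : ℕ} (hc : ∀ a ∈ listOf c k, 1 ≤ a) (hck : 1 ≤ c (k + 1)) (α : ℝ) :
    α ∈ Cset b c (k + 1) ↔
      remainder α (listOf b (k + 1)) (listOf c k) ∈
        Ioc (gap (listOf c k) (c (k + 1) + 1)) (gap (listOf c k) (c (k + 1))) := by
  rw [Cset, Nat.add_sub_cancel, listOf_succ c, mem_hIco_cf_append_iff hc hck, remainder,
    sub_right_comm]

lemma mem_Aset_iff {α : ℝ} (hα : α ∈ Icc 0 1) {n : ℕ} :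
    α ∈ Aset b c n ↔ ∀ k, 1 ≤ k → k ≤ n → α ∈ Bset b c k ∧ α ∈ Cset b c k := by
  cases n with
  | zero => exact iff_of_true hα fun k hk h0 => by omega
  | succ n => simp [Aset, and_imp]

def Admissible (α : ℝ) (b c : ℕ → ℕ) (n : ℕ) : Prop :=
  ∀ k, 1 ≤ k → k ≤ n → (2 ≤ b k ∧ 1 ≤ c k) ∧ α ∈ Bset b c k ∧ α ∈ Cset b c k

lemma admissible_iff {α : ℝ} (hα : α ∈ Icc 0 1) {n : ℕ} :
    Admissible α b c n ↔ (∀ k, 1 ≤ k → k ≤ n → 2 ≤ b k ∧ 1 ≤ c k) ∧ α ∈ Aset b c n := by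
  simp only [Admissible, mem_Aset_iff hα, imp_and, forall_and]

end Digits

namespace Admissible

variable {α : ℝ} {b c b' c' : ℕ → ℕ} {n : ℕ}

lemma mono (h : Admissible α b c n) {m : ℕ} (hmn : m ≤ n) : Admissible α b c m :=
  fun k hk hkm => h k hk (hkm.trans hmn)

lemma one_le_b (h : Admissible α b c n) : ∀ a ∈ listOf b n, 1 ≤ a := by
  simp only [listOf, List.mem_map, List.mem_range]
  rintro _ ⟨i, hi, rfl⟩
  have := (h (i + 1) (by omega) (by omega)).1.1
  omega

lemma one_le_c (h : Admissible α b c n) : ∀ a ∈ listOf c n, 1 ≤ a := by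
  simp only [listOf, List.mem_map, List.mem_range]
  rintro _ ⟨i, hi, rfl⟩
  exact (h (i + 1) (by omega) (by omega)).1.2

lemma remainder_pos {k : ℕ} (h : Admissible α b c (k + 1)) :
    0 < remainder α (listOf b k) (listOf c k) := by
  obtain ⟨⟨hb, -⟩, hB, -⟩ := h (k + 1) le_add_self le_rfl
  have hpos := (h.mono k.le_succ).one_le_b
  rw [mem_Bset_succ_iff hpos (m := b (k + 1) - 1) (by omega) (by omega)] at hB
  exact (gap_pos hpos (by omega)).trans hB.1

lemma listOf_eq (h : Admissible α b c n) (h' : Admissible α b' c' n) :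
    listOf b n = listOf b' n ∧ listOf c n = listOf c' n := by
  induction n with
  | zero => exact ⟨rfl, rfl⟩
  | succ k ih =>
    obtain ⟨hb, hc⟩ := ih (h.mono k.le_succ) (h'.mono k.le_succ)
    obtain ⟨⟨hb2, hc1⟩, hB, hC⟩ := h (k + 1) le_add_self le_rfl
    obtain ⟨⟨hb2', hc1'⟩, hB', hC'⟩ := h' (k + 1) le_add_self le_rfl
    have hpb := (h.mono k.le_succ).one_le_b
    have hpc := (h.mono k.le_succ).one_le_c
    rw [mem_Bset_succ_iff hpb (m := b (k + 1) - 1) (by omega) (by omega)] at hB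
    rw [mem_Bset_succ_iff (h'.mono k.le_succ).one_le_b (m := b' (k + 1) - 1) (by omega)
      (by omega), ← hb, ← hc] at hB'
    have hbk : b (k + 1) = b' (k + 1) := by
      have := AntitoneOn.eq_of_mem_Ioc (gap_antitoneOn hpb) hB hB'
      omega
    have hlb : listOf b (k + 1) = listOf b' (k + 1) := by rw [listOf_succ, listOf_succ, hb, hbk]
    rw [mem_Cset_succ_iff hpc hc1] at hC
    rw [mem_Cset_succ_iff (h'.mono k.le_succ).one_le_c hc1', ← hc, ← hlb] at hC'
    have hck := AntitoneOn.eq_of_mem_Ioc (gap_antitoneOn hpc) hC hC'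
    exact ⟨hlb, by rw [listOf_succ, listOf_succ, hc, hck]⟩

lemma eq_of_remainder_eq_zero {n' : ℕ} (h : Admissible α b c n) (h' : Admissible α b' c' n')
    (hr : remainder α (listOf b n) (listOf c n) = 0)
    (hr' : remainder α (listOf b' n') (listOf c' n') = 0) :
    n = n' ∧ listOf b n = listOf b' n ∧ listOf c n = listOf c' n := by
  wlog hle : n ≤ n' generalizing n n' b c b' c'
  · obtain ⟨rfl, hb, hc⟩ := this h' h hr' hr (by omega)
    exact ⟨rfl, hb.symm, hc.symm⟩
  obtain ⟨hb, hc⟩ := h.listOf_eq (h'.mono hle)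
  refine ⟨?_, hb, hc⟩
  by_contra hne
  have hpos := (h'.mono (show n + 1 ≤ n' by omega)).remainder_pos
  rw [← hb, ← hc, hr] at hpos
  exact lt_irrefl _ hpos

end Admissible

lemma lt_of_gap_bounds {P P' u u' m c D : ℝ} (hP : 0 < P) (hP' : 0 ≤ P') (hu : 0 < u)
    (hu' : 0 ≤ u') (hm : 0 < m) (hc : 0 ≤ c)
    (hDb : D ≤ 1 / (P * (m * P + P')))
    (hd : 1 / (u * ((c + 1) * u + u')) < D - 1 / (P * ((m + 1) * P + P')))
    (hDc : D ≤ 1 / (u * (u + u'))) :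
    m < c := by
  -- With `Q = (m + 1) P + P'` and `U = (c + 1) u + u'`, the bounds give `(Q - P) Q < u U` and
  -- `(u + u') U < c P Q`, so `Q² < (c + 1) P Q`.
  set Q := (m + 1) * P + P'
  set U := (c + 1) * u + u'
  have hR : 0 < m * P + P' := by positivity
  have hQ : 0 < Q := by positivity
  have hU : 0 < U := by positivity
  have hsub_b : 1 / (P * (m * P + P')) - 1 / (P * Q) = 1 / ((m * P + P') * Q) := by
    field_simp
    ring
  have hsub_c : 1 / (u * (u + u')) - 1 / (u * U) = c / ((u + u') * U) := by
    field_simp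
    ring
  have hQU : (m * P + P') * Q < u * U := by
    rw [← one_div_lt_one_div (by positivity) (by positivity)]
    linarith
  have hUQ : 1 * ((u + u') * U) < c * (P * Q) := by
    rw [← div_lt_div_iff₀ (by positivity) (by positivity)]
    linarith
  have hQP : Q * Q < ((c + 1) * P) * Q := by
    nlinarith [mul_le_mul_of_nonneg_right (le_add_of_nonneg_right hu' : u ≤ u + u') hU.le]
  have hQlt : Q < (c + 1) * P := lt_of_mul_lt_mul_right hQP hQ.le
  nlinarith

def nextB (α : ℝ) (lb lc : List ℕ) : ℕ := bracketIndex (gap lb) (remainder α lb lc) + 1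

def nextC (α : ℝ) (lb lc : List ℕ) : ℕ :=
  bracketIndex (gap lc) (remainder α (lb ++ [nextB α lb lc]) lc)

structure GreedyInv (α : ℝ) (lb lc : List ℕ) : Prop where
  length_eq : lb.length = lc.length
  one_le_b : ∀ a ∈ lb, 1 ≤ a
  one_le_c : ∀ a ∈ lc, 1 ≤ a
  den_le : den lb ≤ den lc
  den'_le : den' lb ≤ den' lc
  remainder_nonneg : 0 ≤ remainder α lb lc
  remainder_le_gap : remainder α lb lc ≤ gap lc 1

namespace GreedyInv

variable {α : ℝ} {lb lc : List ℕ}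

lemma nil (hα : α ∈ Icc 0 1) : GreedyInv α [] [] where
  length_eq := rfl
  one_le_b := by simp
  one_le_c := by simp
  den_le := le_rfl
  den'_le := le_rfl
  remainder_nonneg := by simpa [remainder, cf] using hα.1
  remainder_le_gap := by simpa [remainder, cf, gap, den, den', contMat] using hα.2

variable (h : GreedyInv α lb lc)
include h

lemma remainder_append_nextB :
    remainder α (lb ++ [nextB α lb lc]) lc = remainder α lb lc - gap lb (nextB α lb lc) :=
  remainder_append_left α h.one_le_b h.length_eq (Nat.le_add_left 1 _)

variable (hr : 0 < remainder α lb lc)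
include hr

lemma nextB_spec :
    1 ≤ bracketIndex (gap lb) (remainder α lb lc) ∧
      remainder α lb lc ∈
        Ioc (gap lb (nextB α lb lc)) (gap lb (bracketIndex (gap lb) (remainder α lb lc))) :=
  bracketIndex_spec (tendsto_gap h.one_le_b) hr
    (h.remainder_le_gap.trans (gap_le_gap h.one_le_b h.den_le h.den'_le le_rfl))

lemma nextC_spec :
    1 ≤ nextC α lb lc ∧
      remainder α (lb ++ [nextB α lb lc]) lc ∈
        Ioc (gap lc (nextC α lb lc + 1)) (gap lc (nextC α lb lc)) := by
  have hD := (h.nextB_spec hr).2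
  have hgap : 0 < gap lb (nextB α lb lc) := gap_pos h.one_le_b (Nat.le_add_left 1 _)
  refine bracketIndex_spec (tendsto_gap h.one_le_c) ?_ ?_ <;> rw [h.remainder_append_nextB]
  · linarith [hD.1]
  · linarith [h.remainder_le_gap]

lemma nextB_le_nextC : nextB α lb lc ≤ nextC α lb lc := by
  obtain ⟨hm, hDb⟩ := h.nextB_spec hr
  obtain ⟨hc, hd, -⟩ := h.nextC_spec hr
  rw [h.remainder_append_nextB] at hd
  have hP : (1 : ℝ) ≤ den lb := by exact_mod_cast one_le_den h.one_le_b
  have hu : (1 : ℝ) ≤ den lc := by exact_mod_cast one_le_den h.one_le_c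
  have hm' : (1 : ℝ) ≤ bracketIndex (gap lb) (remainder α lb lc) := by exact_mod_cast hm
  have hDc := h.remainder_le_gap
  simp only [nextB, gap, Nat.cast_add, Nat.cast_one, one_mul] at hDb hd hDc
  have key := lt_of_gap_bounds (by linarith) (Nat.cast_nonneg _) (by linarith)
    (Nat.cast_nonneg _) (by linarith) (Nat.cast_nonneg _) hDb.2 hd hDc
  unfold nextB
  exact_mod_cast key

lemma append : GreedyInv α (lb ++ [nextB α lb lc]) (lc ++ [nextC α lb lc]) := by
  obtain ⟨hc, hd⟩ := h.nextC_spec hr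
  have hb : 1 ≤ nextB α lb lc := Nat.le_add_left 1 _
  refine ⟨by simp [h.length_eq], ?_, ?_, ?_, ?_, ?_, ?_⟩
  · simpa [or_imp, forall_and] using ⟨h.one_le_b, hb⟩
  · simpa [or_imp, forall_and] using ⟨h.one_le_c, hc⟩
  · rw [den_append_singleton, den_append_singleton]
    exact add_le_add (Nat.mul_le_mul (h.nextB_le_nextC hr) h.den_le) h.den'_le
  · rw [den'_append_singleton, den'_append_singleton]
    exact h.den_le
  · rw [remainder_append_right α _ h.one_le_c hc]
    linarith [hd.2]
  · rw [remainder_append_right α _ h.one_le_c hc, ← gap_sub_gap_succ h.one_le_c hc]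
    linarith [hd.1]

end GreedyInv

def greedyStep (α : ℝ) (s : List ℕ × List ℕ) : List ℕ × List ℕ :=
  (s.1 ++ [nextB α s.1 s.2], s.2 ++ [nextC α s.1 s.2])

def greedy (α : ℝ) (k : ℕ) : List ℕ × List ℕ := (greedyStep α)^[k] ([], [])

-- `greedyB α k` and `greedyC α k` are the `k`-th digits, `k ≥ 1`.
def greedyB (α : ℝ) (k : ℕ) : ℕ := nextB α (greedy α (k - 1)).1 (greedy α (k - 1)).2

def greedyC (α : ℝ) (k : ℕ) : ℕ := nextC α (greedy α (k - 1)).1 (greedy α (k - 1)).2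

lemma greedy_eq (α : ℝ) (k : ℕ) : greedy α k = (listOf (greedyB α) k, listOf (greedyC α) k) := by
  induction k with
  | zero => rfl
  | succ k ih =>
    rw [greedy, Function.iterate_succ_apply', ← greedy, listOf_succ, listOf_succ]
    show ((greedy α k).1 ++ [greedyB α (k + 1)], (greedy α k).2 ++ [greedyC α (k + 1)]) = _
    rw [ih]

lemma greedyB_succ (α : ℝ) (k : ℕ) :
    greedyB α (k + 1) = nextB α (listOf (greedyB α) k) (listOf (greedyC α) k) := by
  rw [greedyB, Nat.add_sub_cancel, greedy_eq]

lemma greedyC_succ (α : ℝ) (k : ℕ) :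
    greedyC α (k + 1) = nextC α (listOf (greedyB α) k) (listOf (greedyC α) k) := by
  rw [greedyC, Nat.add_sub_cancel, greedy_eq]

section Greedy

variable {α : ℝ} (hα : α ∈ Icc 0 1)
include hα

lemma greedyInv_listOf {n : ℕ}
    (hne : ∀ j < n, remainder α (listOf (greedyB α) j) (listOf (greedyC α) j) ≠ 0) :
    GreedyInv α (listOf (greedyB α) n) (listOf (greedyC α) n) := by
  induction n with
  | zero => exact GreedyInv.nil hα
  | succ k ih =>
    have h := ih fun j hj => hne j (by omega)
    rw [listOf_succ, listOf_succ, greedyB_succ, greedyC_succ]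
    exact h.append (lt_of_le_of_ne h.remainder_nonneg (hne k k.lt_succ_self).symm)

lemma admissible_greedy {n : ℕ}
    (hne : ∀ j < n, remainder α (listOf (greedyB α) j) (listOf (greedyC α) j) ≠ 0) :
    Admissible α (greedyB α) (greedyC α) n := by
  intro k hk hkn
  obtain ⟨j, rfl⟩ := Nat.exists_eq_add_of_le' hk
  have h := greedyInv_listOf hα (n := j) fun i hi => hne i (by omega)
  have hr := lt_of_le_of_ne h.remainder_nonneg (hne j (by omega)).symm
  obtain ⟨hm, hB⟩ := h.nextB_spec hr
  obtain ⟨hc, hC⟩ := h.nextC_spec hr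
  rw [← greedyC_succ] at hc
  refine ⟨⟨by rw [greedyB_succ]; unfold nextB; omega, hc⟩,
    (mem_Bset_succ_iff h.one_le_b hm (greedyB_succ α j) α).2 hB,
    (mem_Cset_succ_iff h.one_le_c hc α).2 ?_⟩
  rwa [listOf_succ, greedyB_succ, greedyC_succ]

end Greedy

/-- every `α ∈ [0,1]` admits either unique finite sequences with
`α ∈ Aₙ` and `α = [0;b₁,…,bₙ] + [0;c₁,…,cₙ]`, or unique infinite sequences with
`α ∈ Aₙ` for all `n`. -/
theorem stmt16 (α : ℝ) (hα : α ∈ Set.Icc (0 : ℝ) 1) :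
    (∃ n : ℕ, ∃ b c : ℕ → ℕ,
      ((∀ k : ℕ, 1 ≤ k → k ≤ n → 2 ≤ b k ∧ 1 ≤ c k) ∧ α ∈ Aset b c n ∧
        α = cf (listOf b n) + cf (listOf c n)) ∧
      (∀ n' : ℕ, ∀ b' c' : ℕ → ℕ,
        ((∀ k : ℕ, 1 ≤ k → k ≤ n' → 2 ≤ b' k ∧ 1 ≤ c' k) ∧ α ∈ Aset b' c' n' ∧
          α = cf (listOf b' n') + cf (listOf c' n')) →
        n' = n ∧ ∀ k : ℕ, 1 ≤ k → k ≤ n → b' k = b k ∧ c' k = c k)) ∨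
    (∃ b c : ℕ → ℕ,
      ((∀ k : ℕ, 1 ≤ k → 2 ≤ b k ∧ 1 ≤ c k) ∧ ∀ n : ℕ, α ∈ Aset b c n) ∧
      (∀ b' c' : ℕ → ℕ,
        ((∀ k : ℕ, 1 ≤ k → 2 ≤ b' k ∧ 1 ≤ c' k) ∧ ∀ n : ℕ, α ∈ Aset b' c' n) →
        ∀ k : ℕ, 1 ≤ k → b' k = b k ∧ c' k = c k)) := by
  classical
  by_cases hfin : ∃ n, remainder α (listOf (greedyB α) n) (listOf (greedyC α) n) = 0
  · left
    have hadm := admissible_greedy hα fun j hj => Nat.find_min hfin hj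
    obtain ⟨hv, hA⟩ := (admissible_iff hα).1 hadm
    refine ⟨_, greedyB α, greedyC α,
      ⟨hv, hA, remainder_eq_zero_iff.1 (Nat.find_spec hfin)⟩, ?_⟩
    rintro n' b' c' ⟨hv', hA', hsum'⟩
    obtain ⟨hn, hb, hc⟩ := hadm.eq_of_remainder_eq_zero ((admissible_iff hα).2 ⟨hv', hA'⟩)
      (Nat.find_spec hfin) (remainder_eq_zero_iff.2 hsum')
    exact ⟨hn.symm, fun k hk hkn =>
      ⟨(listOf_eq_listOf_iff.1 hb k hk hkn).symm, (listOf_eq_listOf_iff.1 hc k hk hkn).symm⟩⟩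
  · right
    simp only [not_exists] at hfin
    have hadm (n : ℕ) := admissible_greedy hα (n := n) fun j _ => hfin j
    refine ⟨greedyB α, greedyC α,
      ⟨fun k hk => (hadm k k hk le_rfl).1, fun n => ((admissible_iff hα).1 (hadm n)).2⟩, ?_⟩
    rintro b' c' ⟨hv', hA'⟩ k hk
    have h' := (admissible_iff hα).2 ⟨fun j hj _ => hv' j hj, hA' k⟩
    obtain ⟨hb, hc⟩ := h'.listOf_eq (hadm k)
    exact ⟨listOf_eq_listOf_iff.1 hb k hk le_rfl, listOf_eq_listOf_iff.1 hc k hk le_rfl⟩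

end ShulgaPaper
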